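/- arXiv:2501.09638 — 6 statements merged into one kernel-verified Lean document; each statement's English description precedes it below -/
import Mathlib

section
/- Let T > 0 and β > 0. For every finite signed measure μ on the interval [0,T], the double integral ∫_{[0,T]} ∫_{[0,T]} e^{-β|t-s|} dμ(s) dμ(t) is nonnegative. Consequently, for any finite signed measures μ_1, …, μ_N on [0,T], one has -∑_{i=1}^N ∑_{j≠i} ∫∫ e^{-β|t-s|} dμ_j(s) dμ_i(t) ≤ ∑_{i=1}^N ∫∫ e^{-β|t-s|} dμ_i(s) dμ_i(t). -/
open MeasureTheory Set Real

noncomputable section ExpKernelAux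

def hker (β x t : ℝ) : ℝ := if x ≤ t then Real.exp (-β * (t - x)) else 0

lemma hker_nonneg (β x t : ℝ) : 0 ≤ hker β x t := by
  unfold hker; split
  · positivity
  · exact le_rfl

lemma hker_le_one {β : ℝ} (hβ : 0 < β) (x t : ℝ) : hker β x t ≤ 1 := by
  unfold hker; split
  · rename_i h
    rw [Real.exp_le_one_iff]
    nlinarith
  · norm_num

lemma measurable_hker (β : ℝ) : Measurable (fun p : ℝ × ℝ => hker β p.1 p.2) := by
  unfold hker
  exact Measurable.ite (measurableSet_le measurable_fst measurable_snd)
    (by fun_prop) measurable_const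

def gbd (T β : ℝ) (x : ℝ) : ℝ := Set.indicator (Iic T) (fun x => min 1 (Real.exp (β * x))) x

lemma gbd_nonneg (T β x : ℝ) : 0 ≤ gbd T β x := by
  unfold gbd
  apply Set.indicator_nonneg
  intro x _
  positivity

lemma hker_le_gbd {T β : ℝ} (hβ : 0 < β) {x t : ℝ} (h0 : 0 ≤ t) (hT : t ≤ T) :
    hker β x t ≤ gbd T β x := by
  unfold hker
  split
  · rename_i h
    rw [gbd, Set.indicator_of_mem (by simp only [Set.mem_Iic]; linarith)]
    exact le_min (Real.exp_le_one_iff.2 (by nlinarith)) (Real.exp_le_exp.2 (by nlinarith))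
  · exact gbd_nonneg T β x

lemma expIntegrableIic (m : ℝ) {c : ℝ} (hc : 0 < c) :
    IntegrableOn (fun x => Real.exp (c * x)) (Iic m) := by
  rw [← (Measure.measurePreserving_neg (volume : Measure ℝ)).integrableOn_comp_preimage
      (Homeomorph.neg ℝ).measurableEmbedding]
  simp only [Function.comp_def, neg_preimage, neg_Iic, mul_neg]
  rw [integrableOn_Ici_iff_integrableOn_Ioi]
  simpa [neg_mul] using exp_neg_integrableOn_Ioi (-m) hc

lemma expIntegralIic (m : ℝ) {c : ℝ} (hc : 0 < c) :
    ∫ x in Iic m, Real.exp (c * x) = Real.exp (c * m) / c := by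
  have h1 : ∫ x in Iic m, Real.exp (c * x) = ∫ x in Ioi (-m), Real.exp (-(c * x)) := by
    rw [← integral_comp_neg_Iic m (fun y => Real.exp (-(c * y)))]
    congr 1; ext x; ring_nf
  rw [h1, integral_comp_mul_left_Ioi (fun y => Real.exp (-y)) (-m) hc]
  rw [integral_exp_neg_Ioi]
  rw [smul_eq_mul]
  ring_nf

lemma integrable_gbd {T β : ℝ} (hT : 0 < T) (hβ : 0 < β) : Integrable (gbd T β) := by
  unfold gbd
  rw [integrable_indicator_iff measurableSet_Iic]
  have hmeas : Measurable fun x : ℝ => min 1 (Real.exp (β * x)) := by fun_prop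
  have : Iic T = Iic (0:ℝ) ∪ Ioc (0:ℝ) T := (Set.Iic_union_Ioc_eq_Iic hT.le).symm
  rw [this, integrableOn_union]
  constructor
  · apply Integrable.mono' (expIntegrableIic 0 hβ) hmeas.aestronglyMeasurable
    filter_upwards with x
    rw [Real.norm_eq_abs, abs_of_nonneg (by positivity)]
    exact min_le_right _ _
  · apply Integrable.mono' (g := fun _ => (1:ℝ))
      (integrableOn_const measure_Ioc_lt_top.ne) hmeas.aestronglyMeasurable
    filter_upwards with x
    rw [Real.norm_eq_abs, abs_of_nonneg (by positivity)]
    exact min_le_left _ _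

lemma hker_mul_integral {β : ℝ} (hβ : 0 < β) (t s : ℝ) :
    ∫ x : ℝ, hker β x t * hker β x s = Real.exp (-β * |t - s|) / (2 * β) := by
  have key : ∀ x : ℝ, hker β x t * hker β x s
      = Set.indicator (Iic (min t s)) (fun x => Real.exp (-β * (t + s)) * Real.exp (2 * β * x)) x := by
    intro x
    unfold hker
    by_cases h1 : x ≤ t <;> by_cases h2 : x ≤ s <;>
      simp only [h1, h2, if_true, if_false, Set.indicator, Set.mem_Iic, le_min_iff,
        zero_mul, mul_zero, and_true, and_false, false_and, if_false] <;>
      try rfl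
    rw [← Real.exp_add, ← Real.exp_add]
    congr 1; ring
  simp_rw [key]
  rw [integral_indicator measurableSet_Iic, integral_const_mul _ _,
    expIntegralIic (min t s) (by positivity : (0:ℝ) < 2 * β)]
  rw [← mul_div_assoc, ← Real.exp_add]
  rcases le_total t s with h | h
  · rw [min_eq_left h, abs_of_nonpos (by linarith)]
    congr 2; ring
  · rw [min_eq_right h, abs_of_nonneg (by linarith)]
    congr 2; ring


-- measurability of gbd
lemma measurable_gbd (T β : ℝ) : Measurable (gbd T β) :=
  Measurable.indicator (by fun_prop) measurableSet_Iic

def Fm (T β : ℝ) (ρ : Measure (Set.Icc (0:ℝ) T)) (x : ℝ) : ℝ :=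
  ∫ t, hker β x (t : ℝ) ∂ρ

variable {T β : ℝ}

lemma Fm_nonneg (ρ : Measure (Set.Icc (0:ℝ) T)) (x : ℝ) : 0 ≤ Fm T β ρ x :=
  integral_nonneg fun t => hker_nonneg β x t

lemma measurable_hker_prod (β : ℝ) :
    Measurable (fun p : ℝ × (Set.Icc (0:ℝ) T) => hker β p.1 (p.2 : ℝ)) :=
  (measurable_hker β).comp (measurable_fst.prodMk (measurable_subtype_coe.comp measurable_snd))

lemma integrable_hker_right (ρ : Measure (Set.Icc (0:ℝ) T)) [IsFiniteMeasure ρ]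
    (hβ : 0 < β) (x : ℝ) : Integrable (fun t : Set.Icc (0:ℝ) T => hker β x (t : ℝ)) ρ := by
  apply Integrable.mono' (integrable_const (1:ℝ))
  · exact ((measurable_hker β).comp (measurable_const.prodMk measurable_subtype_coe)).aestronglyMeasurable
  · filter_upwards with t
    rw [Real.norm_eq_abs, abs_of_nonneg (hker_nonneg β x t)]
    exact hker_le_one hβ x t

lemma Fm_le_mass (ρ : Measure (Set.Icc (0:ℝ) T)) [IsFiniteMeasure ρ] (hβ : 0 < β) (x : ℝ) :
    Fm T β ρ x ≤ (ρ Set.univ).toReal := by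
  have := integral_mono (integrable_hker_right ρ hβ x) (integrable_const (1:ℝ))
    (fun t => hker_le_one hβ x t)
  simpa [Fm, integral_const, smul_eq_mul, measureReal_def] using this

lemma Fm_le_gbd (ρ : Measure (Set.Icc (0:ℝ) T)) [IsFiniteMeasure ρ] (hβ : 0 < β) (x : ℝ) :
    Fm T β ρ x ≤ (ρ Set.univ).toReal * gbd T β x := by
  have := integral_mono (integrable_hker_right ρ hβ x) (integrable_const (gbd T β x))
    (fun t => hker_le_gbd hβ t.2.1 t.2.2)
  simpa [Fm, integral_const, smul_eq_mul, measureReal_def] using this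

lemma stronglyMeasurable_Fm (ρ : Measure (Set.Icc (0:ℝ) T)) [SFinite ρ] :
    StronglyMeasurable (Fm T β ρ) :=
  (measurable_hker_prod β).stronglyMeasurable.integral_prod_right'

lemma integrable_Fm_mul (hT : 0 < T) (hβ : 0 < β) (ρ₁ ρ₂ : Measure (Set.Icc (0:ℝ) T))
    [IsFiniteMeasure ρ₁] [IsFiniteMeasure ρ₂] :
    Integrable (fun x => Fm T β ρ₁ x * Fm T β ρ₂ x) := by
  apply Integrable.mono'
    ((integrable_gbd hT hβ).const_mul ((ρ₁ Set.univ).toReal * (ρ₂ Set.univ).toReal))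
    (((stronglyMeasurable_Fm ρ₁).mul (stronglyMeasurable_Fm ρ₂)).aestronglyMeasurable)
  filter_upwards with x
  simp only [Pi.mul_apply]
  rw [Real.norm_eq_abs, abs_of_nonneg (mul_nonneg (Fm_nonneg ρ₁ x) (Fm_nonneg ρ₂ x))]
  calc Fm T β ρ₁ x * Fm T β ρ₂ x
      ≤ ((ρ₁ Set.univ).toReal * gbd T β x) * (ρ₂ Set.univ).toReal :=
        mul_le_mul (Fm_le_gbd ρ₁ hβ x) (Fm_le_mass ρ₂ hβ x) (Fm_nonneg ρ₂ x)
          (mul_nonneg ENNReal.toReal_nonneg (gbd_nonneg T β x))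
    _ = (ρ₁ Set.univ).toReal * (ρ₂ Set.univ).toReal * gbd T β x := by ring

lemma integrable_gbd_snd (hT : 0 < T) (hβ : 0 < β) (ρ : Measure (Set.Icc (0:ℝ) T))
    [IsFiniteMeasure ρ] :
    Integrable (fun p : (Set.Icc (0:ℝ) T) × ℝ => gbd T β p.2) (ρ.prod volume) := by
  have hm : AEStronglyMeasurable (fun p : (Set.Icc (0:ℝ) T) × ℝ => gbd T β p.2) (ρ.prod volume) :=
    Measurable.aestronglyMeasurable (by exact (measurable_gbd T β).comp measurable_snd)
  rw [integrable_prod_iff hm]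
  refine ⟨Filter.Eventually.of_forall fun s => integrable_gbd hT hβ, ?_⟩
  simpa using integrable_const (μ := ρ) (∫ x : ℝ, ‖gbd T β x‖)

theorem kernelInt_eq (hT : 0 < T) (hβ : 0 < β) (ρ₁ ρ₂ : Measure (Set.Icc (0:ℝ) T))
    [IsFiniteMeasure ρ₁] [IsFiniteMeasure ρ₂] :
    ∫ t, (∫ s, Real.exp (-β * |(t : ℝ) - (s : ℝ)|) ∂ρ₂) ∂ρ₁
      = (2*β) * ∫ x, Fm T β ρ₁ x * Fm T β ρ₂ x := by
  have step1 : ∀ t : Set.Icc (0:ℝ) T,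
      ∫ s, Real.exp (-β * |(t : ℝ) - (s : ℝ)|) ∂ρ₂
        = (2*β) * ∫ x : ℝ, hker β x (t : ℝ) * Fm T β ρ₂ x := by
    intro t
    have e1 : (fun s : Set.Icc (0:ℝ) T => Real.exp (-β * |(t : ℝ) - (s : ℝ)|))
        = fun s : Set.Icc (0:ℝ) T => (2*β) * ∫ x : ℝ, hker β x (t : ℝ) * hker β x (s : ℝ) := by
      funext s
      rw [hker_mul_integral hβ]
      field_simp
    rw [e1, integral_const_mul]
    have hint : Integrable (Function.uncurry fun (s : Set.Icc (0:ℝ) T) (x : ℝ) =>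
        hker β x (t : ℝ) * hker β x (s : ℝ)) (ρ₂.prod volume) := by
      apply Integrable.mono' (integrable_gbd_snd hT hβ ρ₂)
      · apply Measurable.aestronglyMeasurable
        exact ((measurable_hker β).comp (measurable_snd.prodMk measurable_const)).mul
          ((measurable_hker β).comp
            (measurable_snd.prodMk (measurable_subtype_coe.comp measurable_fst)))
      · filter_upwards with p
        rw [Real.norm_eq_abs, Function.uncurry,
          abs_of_nonneg (mul_nonneg (hker_nonneg _ _ _) (hker_nonneg _ _ _))]
        calc hker β p.2 (t : ℝ) * hker β p.2 (p.1 : ℝ)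
            ≤ gbd T β p.2 * 1 :=
              mul_le_mul (hker_le_gbd hβ t.2.1 t.2.2) (hker_le_one hβ _ _)
                (hker_nonneg _ _ _) (gbd_nonneg _ _ _)
          _ = gbd T β p.2 := mul_one _
    rw [integral_integral_swap hint]
    congr 1
    apply integral_congr_ae
    filter_upwards with x
    exact integral_const_mul _ _
  rw [integral_congr_ae (Filter.Eventually.of_forall step1), integral_const_mul]
  congr 1
  have hint2 : Integrable (Function.uncurry fun (t : Set.Icc (0:ℝ) T) (x : ℝ) =>
      hker β x (t : ℝ) * Fm T β ρ₂ x) (ρ₁.prod volume) := by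
    apply Integrable.mono' ((integrable_gbd_snd hT hβ ρ₁).mul_const ((ρ₂ Set.univ).toReal))
    · apply Measurable.aestronglyMeasurable
      exact ((measurable_hker β).comp
          (measurable_snd.prodMk (measurable_subtype_coe.comp measurable_fst))).mul
        ((stronglyMeasurable_Fm ρ₂).measurable.comp measurable_snd)
    · filter_upwards with p
      rw [Real.norm_eq_abs, Function.uncurry,
        abs_of_nonneg (mul_nonneg (hker_nonneg _ _ _) (Fm_nonneg ρ₂ _))]
      exact mul_le_mul (hker_le_gbd hβ p.1.2.1 p.1.2.2) (Fm_le_mass ρ₂ hβ _)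
        (Fm_nonneg ρ₂ _) (gbd_nonneg _ _ _)
  rw [integral_integral_swap hint2]
  apply integral_congr_ae
  filter_upwards with x
  exact integral_mul_const _ _


def Lm (T β : ℝ) (μ : SignedMeasure (Set.Icc (0:ℝ) T)) (x : ℝ) : ℝ :=
  Fm T β μ.toJordanDecomposition.posPart x - Fm T β μ.toJordanDecomposition.negPart x

lemma integrable_Lm_mul (hT : 0 < T) (hβ : 0 < β) (μ ν : SignedMeasure (Set.Icc (0:ℝ) T)) :
    Integrable (fun x => Lm T β μ x * Lm T β ν x) := by
  have h : (fun x => Lm T β μ x * Lm T β ν x)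
      = fun x => (Fm T β μ.toJordanDecomposition.posPart x * Fm T β ν.toJordanDecomposition.posPart x
          - Fm T β μ.toJordanDecomposition.posPart x * Fm T β ν.toJordanDecomposition.negPart x)
        - (Fm T β μ.toJordanDecomposition.negPart x * Fm T β ν.toJordanDecomposition.posPart x
          - Fm T β μ.toJordanDecomposition.negPart x * Fm T β ν.toJordanDecomposition.negPart x) := by
    funext x; unfold Lm; ring
  rw [h]
  exact ((integrable_Fm_mul hT hβ _ _).sub (integrable_Fm_mul hT hβ _ _)).sub
    ((integrable_Fm_mul hT hβ _ _).sub (integrable_Fm_mul hT hβ _ _))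

end ExpKernelAux

open MeasureTheory

/-- The double integral `∫∫ e^{-β|t-s|} dμ(s) dν(t)` of the exponential kernel against
two finite signed measures on `[0,T]`, defined via the Jordan decompositions. -/
noncomputable def expKernelInt (T β : ℝ)
    (μ ν : MeasureTheory.SignedMeasure (Set.Icc (0 : ℝ) T)) : ℝ :=
  (∫ t, (∫ s, Real.exp (-β * |(t : ℝ) - (s : ℝ)|)
        ∂μ.toJordanDecomposition.posPart) ∂ν.toJordanDecomposition.posPart)
    - (∫ t, (∫ s, Real.exp (-β * |(t : ℝ) - (s : ℝ)|)
        ∂μ.toJordanDecomposition.negPart) ∂ν.toJordanDecomposition.posPart)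
    - (∫ t, (∫ s, Real.exp (-β * |(t : ℝ) - (s : ℝ)|)
        ∂μ.toJordanDecomposition.posPart) ∂ν.toJordanDecomposition.negPart)
    + (∫ t, (∫ s, Real.exp (-β * |(t : ℝ) - (s : ℝ)|)
        ∂μ.toJordanDecomposition.negPart) ∂ν.toJordanDecomposition.negPart)

lemma expKernelInt_eq {T β : ℝ} (hT : 0 < T) (hβ : 0 < β)
    (μ ν : MeasureTheory.SignedMeasure (Set.Icc (0 : ℝ) T)) :
    expKernelInt T β μ ν = (2*β) * ∫ x, Lm T β ν x * Lm T β μ x := by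
  unfold expKernelInt
  rw [kernelInt_eq hT hβ, kernelInt_eq hT hβ, kernelInt_eq hT hβ, kernelInt_eq hT hβ]
  have hfun : (fun x => Lm T β ν x * Lm T β μ x)
      = fun x =>
        (Fm T β ν.toJordanDecomposition.posPart x * Fm T β μ.toJordanDecomposition.posPart x
          - Fm T β ν.toJordanDecomposition.posPart x * Fm T β μ.toJordanDecomposition.negPart x)
        - (Fm T β ν.toJordanDecomposition.negPart x * Fm T β μ.toJordanDecomposition.posPart x
          - Fm T β ν.toJordanDecomposition.negPart x * Fm T β μ.toJordanDecomposition.negPart x) := by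
    funext x; unfold Lm; ring
  have h : ∫ x, Lm T β ν x * Lm T β μ x
      = ((∫ x, Fm T β ν.toJordanDecomposition.posPart x * Fm T β μ.toJordanDecomposition.posPart x)
          - ∫ x, Fm T β ν.toJordanDecomposition.posPart x * Fm T β μ.toJordanDecomposition.negPart x)
        - ((∫ x, Fm T β ν.toJordanDecomposition.negPart x * Fm T β μ.toJordanDecomposition.posPart x)
          - ∫ x, Fm T β ν.toJordanDecomposition.negPart x * Fm T β μ.toJordanDecomposition.negPart x) := by
    have i1 : Integrable (fun x =>
        Fm T β ν.toJordanDecomposition.posPart x * Fm T β μ.toJordanDecomposition.posPart x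
          - Fm T β ν.toJordanDecomposition.posPart x * Fm T β μ.toJordanDecomposition.negPart x) :=
      (integrable_Fm_mul hT hβ _ _).sub (integrable_Fm_mul hT hβ _ _)
    have i2 : Integrable (fun x =>
        Fm T β ν.toJordanDecomposition.negPart x * Fm T β μ.toJordanDecomposition.posPart x
          - Fm T β ν.toJordanDecomposition.negPart x * Fm T β μ.toJordanDecomposition.negPart x) :=
      (integrable_Fm_mul hT hβ _ _).sub (integrable_Fm_mul hT hβ _ _)
    rw [hfun, integral_sub i1 i2,
      integral_sub (integrable_Fm_mul hT hβ _ _) (integrable_Fm_mul hT hβ _ _),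
      integral_sub (integrable_Fm_mul hT hβ _ _) (integrable_Fm_mul hT hβ _ _)]
  rw [h]
  ring

/-- Positive definiteness (in the sense of Bochner) of the exponential kernel
`e^{-β|t-s|}` on `[0,T]`, and the resulting inequality for families of signed measures. -/
theorem expKernel_posdef (T β : ℝ) (hT : 0 < T) (hβ : 0 < β) :
    (∀ μ : MeasureTheory.SignedMeasure (Set.Icc (0 : ℝ) T), 0 ≤ expKernelInt T β μ μ) ∧
    (∀ (N : ℕ) (μ : Fin N → MeasureTheory.SignedMeasure (Set.Icc (0 : ℝ) T)),
      -(∑ i, ∑ j ∈ Finset.univ.erase i, expKernelInt T β (μ j) (μ i))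
        ≤ ∑ i, expKernelInt T β (μ i) (μ i)) := by
  constructor
  · intro μ
    rw [expKernelInt_eq hT hβ]
    exact mul_nonneg (by linarith) (integral_nonneg fun x => mul_self_nonneg _)
  · intro N μ
    have key : 0 ≤ ∑ i, ∑ j, expKernelInt T β (μ j) (μ i) := by
      have e1 : ∑ i, ∑ j, expKernelInt T β (μ j) (μ i)
          = (2*β) * ∑ i, ∑ j, ∫ x, Lm T β (μ i) x * Lm T β (μ j) x := by
        rw [Finset.mul_sum]
        refine Finset.sum_congr rfl fun i _ => ?_
        rw [Finset.mul_sum]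
        exact Finset.sum_congr rfl fun j _ => expKernelInt_eq hT hβ (μ j) (μ i)
      have e2 : ∑ i : Fin N, ∑ j : Fin N, ∫ x, Lm T β (μ i) x * Lm T β (μ j) x
          = ∫ x, ∑ i : Fin N, ∑ j : Fin N, Lm T β (μ i) x * Lm T β (μ j) x := by
        rw [integral_finset_sum _ (fun i _ => integrable_finset_sum _
          (fun j _ => integrable_Lm_mul hT hβ (μ i) (μ j)))]
        refine Finset.sum_congr rfl fun i _ => ?_
        rw [integral_finset_sum _ (fun j _ => integrable_Lm_mul hT hβ (μ i) (μ j))]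
      have e3 : ∀ x, ∑ i : Fin N, ∑ j : Fin N, Lm T β (μ i) x * Lm T β (μ j) x
          = (∑ i : Fin N, Lm T β (μ i) x) * (∑ j : Fin N, Lm T β (μ j) x) := by
        intro x
        rw [Finset.sum_mul_sum]
      rw [e1, e2]
      apply mul_nonneg (by linarith)
      refine integral_nonneg fun x => ?_
      show (0:ℝ) ≤ ∑ i : Fin N, ∑ j : Fin N, Lm T β (μ i) x * Lm T β (μ j) x
      rw [e3 x]
      exact mul_self_nonneg _
    have decomp : ∑ i, ∑ j, expKernelInt T β (μ j) (μ i)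
        = ∑ i, expKernelInt T β (μ i) (μ i)
          + ∑ i, ∑ j ∈ Finset.univ.erase i, expKernelInt T β (μ j) (μ i) := by
      rw [← Finset.sum_add_distrib]
      refine Finset.sum_congr rfl fun i _ => ?_
      exact (Finset.add_sum_erase _ _ (Finset.mem_univ i)).symm
    linarith [key, decomp]
end

section
/- Let N ≥ 2 be an integer and λ, β, ε > 0 reals. Define z_1 = (−λ(N−1) + √((N−1)²λ² + 4βε(N+1)λ + 4β²ε²))/(2ε) and z_2 = (−λ(N−1) − √((N−1)²λ² + 4βε(N+1)λ + 4β²ε²))/(2ε). Define the linear map 𝖠 on ℝ^{2N+1}, acting on vectors (u_0, u_1, …, u_N, w_1, …, w_N), by (𝖠u)_0 = −βu_0 + λ∑_{j=1}^N w_j; (𝖠u)_i = βu_i − λw_i for i = 1, …, N; and (𝖠u)_{N+i} = (β/ε)u_0 − (β/ε)u_i − (λ/ε)∑_{j≠i} w_j for i = 1, …, N. Then for each z ∈ {z_1, z_2}, the vector q(z) ∈ ℝ^{2N+1} given by q(z)_0 = Nλ/(z+β), q(z)_i = −λ/(z−β) for i = 1, …, N, and q(z)_{N+i} = 1 for i =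 1, …, N, satisfies 𝖠 q(z) = z · q(z). -/
/-- The coefficient matrix `𝖠` of the equilibrium ODE system in the model with
instantaneous cost `ε` and terminal inventory penalty, acting on vectors
`(u_0, u_1, …, u_N, w_1, …, w_N) ∈ ℝ^{2N+1}` represented as elements of
`ℝ × (Fin N → ℝ) × (Fin N → ℝ)`. -/
noncomputable def instODEMap (N : ℕ) (lam β ε : ℝ) :
    ℝ × (Fin N → ℝ) × (Fin N → ℝ) → ℝ × (Fin N → ℝ) × (Fin N → ℝ) :=
  fun p =>
    (-β * p.1 + lam * ∑ j, p.2.2 j,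
     fun i => β * p.2.1 i - lam * p.2.2 i,
     fun i => β / ε * p.1 - β / ε * p.2.1 i - lam / ε * ∑ j ∈ Finset.univ.erase i, p.2.2 j)

/-- The vectors `q(z)` with `q(z)_0 = Nλ/(z+β)`, `q(z)_i = −λ/(z−β)` and `q(z)_{N+i} = 1`
are eigenvectors of `𝖠` for the eigenvalues `z ∈ {z_1, z_2}`, the two roots of
`εz² + λ(N−1)z − (εβ² + (N+1)βλ) = 0`. -/
theorem instODEMap_eigenvectors (N : ℕ) (hN : 2 ≤ N) (lam β ε : ℝ)
    (hlam : 0 < lam) (hβ : 0 < β) (hε : 0 < ε)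
    (D z1 z2 : ℝ)
    (hD : D = Real.sqrt (((N : ℝ) - 1) ^ 2 * lam ^ 2
      + 4 * β * ε * ((N : ℝ) + 1) * lam + 4 * β ^ 2 * ε ^ 2))
    (hz1 : z1 = (-(lam * ((N : ℝ) - 1)) + D) / (2 * ε))
    (hz2 : z2 = (-(lam * ((N : ℝ) - 1)) - D) / (2 * ε)) :
    ∀ z ∈ ({z1, z2} : Set ℝ),
      instODEMap N lam β ε
          (((N : ℝ) * lam / (z + β), fun _ => -(lam / (z - β)), fun _ => 1))
        = z • ((((N : ℝ) * lam / (z + β), fun _ => -(lam / (z - β)), fun _ => 1)) :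
            ℝ × (Fin N → ℝ) × (Fin N → ℝ)) := by
  have hNR : (2:ℝ) ≤ (N:ℝ) := by exact_mod_cast hN
  have hD2 : D ^ 2 = ((N : ℝ) - 1) ^ 2 * lam ^ 2
      + 4 * β * ε * ((N : ℝ) + 1) * lam + 4 * β ^ 2 * ε ^ 2 := by
    rw [hD]
    exact Real.sq_sqrt (by positivity)
  have key : ∀ z : ℝ, ε * z ^ 2 + lam * ((N:ℝ) - 1) * z
      = ε * β ^ 2 + ((N:ℝ) + 1) * β * lam →
      instODEMap N lam β ε
          (((N : ℝ) * lam / (z + β), fun _ => -(lam / (z - β)), fun _ => 1))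
        = z • ((((N : ℝ) * lam / (z + β), fun _ => -(lam / (z - β)), fun _ => 1)) :
            ℝ × (Fin N → ℝ) × (Fin N → ℝ)) := by
    intro z hq
    have h1 : z - β ≠ 0 := by
      intro h
      have hz : z = β := by linarith
      rw [hz] at hq
      nlinarith
    have h2 : z + β ≠ 0 := by
      intro h
      have hz : z = -β := by linarith
      rw [hz] at hq
      have hp : 0 < lam * β * (N:ℝ) := by positivity
      nlinarith [hp]
    have hcard : ∀ i : Fin N, ((Finset.univ.erase i).card : ℝ) = (N:ℝ) - 1 := by
      intro i
      rw [Finset.card_erase_of_mem (Finset.mem_univ i), Finset.card_univ, Fintype.card_fin]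
      have : 1 ≤ N := by omega
      push_cast [Nat.cast_sub this]
      ring
    unfold instODEMap
    refine Prod.ext ?_ (Prod.ext ?_ ?_)
    · simp only [Finset.sum_const, Finset.card_univ, Fintype.card_fin, nsmul_eq_mul,
        mul_one, Prod.smul_fst, smul_eq_mul]
      field_simp
      ring
    · funext i
      simp only [Prod.smul_snd, Prod.fst, Prod.smul_fst, Pi.smul_apply, smul_eq_mul]
      field_simp
      ring
    · funext i
      simp only [Prod.smul_snd, Pi.smul_apply, smul_eq_mul, Finset.sum_const, nsmul_eq_mul,
        mul_one, hcard i]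
      field_simp
      linear_combination (-z) * hq
  intro z hz
  rcases hz with hz | hz
  · subst hz
    apply key
    have hsq : (2 * ε * z + lam * ((N:ℝ) - 1)) ^ 2 = D ^ 2 := by
      rw [hz1]; field_simp; ring
    have h4 : ε * (4 * (ε * z ^ 2 + lam * ((N:ℝ) - 1) * z
        - (ε * β ^ 2 + ((N:ℝ) + 1) * β * lam))) = 0 := by
      linear_combination hsq + hD2
    have := mul_eq_zero.mp h4
    rcases this with h | h
    · exact absurd h hε.ne'
    · linarith
  · simp only [Set.mem_singleton_iff] at hz
    subst hz
    apply key
    have hsq : (2 * ε * z + lam * ((N:ℝ) - 1)) ^ 2 = D ^ 2 := by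
      rw [hz2]; field_simp; ring
    have h4 : ε * (4 * (ε * z ^ 2 + lam * ((N:ℝ) - 1) * z
        - (ε * β ^ 2 + ((N:ℝ) + 1) * β * lam))) = 0 := by
      linear_combination hsq + hD2
    have := mul_eq_zero.mp h4
    rcases this with h | h
    · exact absurd h hε.ne'
    · linarith
end

section
/- Let N ≥ 2 be an integer, β, T > 0 reals, x̄ ∈ ℝ, and set θ = β(N+1)T/(N−1). Define m : [0,T] → ℝ by m(t) = x̄ · N((β(T−t)(N+1) + 2)e^{θ} − 2e^{β(N+1)t/(N−1)}) / (((βT+1)N + βT + 3)N e^{θ} − N + 1), and define y(t) = ∫_t^T e^{−β(s−t)} m(s) ds and ℓ(t) = ∫_0^t e^{−β(t−s)} m(s) ds. Then: (i) the denominator ((βT+1)N + βT + 3)N e^{θ} − N + 1 is strictly positive; (ii) m(T) = 0; (iii) m(0) = x̄ · N(((N+1)βT + 2)e^{θ} − 2) / (((βT+1)N + βT + 3)N e^{θ} − N + 1); (iv) for every t ∈ [0,T], m is differentiable at t with m'(t) = −(β/(N−1))·((βy(t) − m(t)) + N(e^{−βt} x̄ + βℓ(t) − m(t))). -/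
/-- The expected mean inventory process arising in the non-existence proof for the
block-cost game: `m(t) = x̄·N((β(T−t)(N+1)+2)e^θ − 2e^{β(N+1)t/(N−1)}) / denom` with
`θ = β(N+1)T/(N−1)` and `denom = ((βT+1)N + βT + 3)N e^θ − N + 1`. -/
noncomputable def meanInventory (N : ℕ) (β T xbar : ℝ) (t : ℝ) : ℝ :=
  xbar * ((N : ℝ) * ((β * (T - t) * ((N : ℝ) + 1) + 2)
        * Real.exp (β * ((N : ℝ) + 1) * T / ((N : ℝ) - 1))
      - 2 * Real.exp (β * ((N : ℝ) + 1) * t / ((N : ℝ) - 1)))) /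
    (((β * T + 1) * (N : ℝ) + β * T + 3) * (N : ℝ)
        * Real.exp (β * ((N : ℝ) + 1) * T / ((N : ℝ) - 1)) - (N : ℝ) + 1)

/-- Antiderivative of `s ↦ e^{-βs} m(s)`. -/
noncomputable def auxF (N : ℕ) (β T xbar : ℝ) (s : ℝ) : ℝ :=
  xbar * (N : ℝ) /
    (((β * T + 1) * (N : ℝ) + β * T + 3) * (N : ℝ)
        * Real.exp (β * ((N : ℝ) + 1) * T / ((N : ℝ) - 1)) - (N : ℝ) + 1) *
    (Real.exp (-β * s) *
        ((((N : ℝ) + 1) * Real.exp (β * ((N : ℝ) + 1) * T / ((N : ℝ) - 1))) * s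
          + (β * ((N : ℝ) + 1) * Real.exp (β * ((N : ℝ) + 1) * T / ((N : ℝ) - 1))
              * (1 / β ^ 2 - T / β)
            - 2 * Real.exp (β * ((N : ℝ) + 1) * T / ((N : ℝ) - 1)) / β))
      - ((N : ℝ) - 1) / β *
          (Real.exp (β * ((N : ℝ) + 1) * s / ((N : ℝ) - 1)) * Real.exp (-β * s)))

/-- Antiderivative of `s ↦ e^{βs} m(s)`. -/
noncomputable def auxG (N : ℕ) (β T xbar : ℝ) (s : ℝ) : ℝ :=
  xbar * (N : ℝ) /
    (((β * T + 1) * (N : ℝ) + β * T + 3) * (N : ℝ)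
        * Real.exp (β * ((N : ℝ) + 1) * T / ((N : ℝ) - 1)) - (N : ℝ) + 1) *
    (Real.exp (β * s) *
        ((-(((N : ℝ) + 1) * Real.exp (β * ((N : ℝ) + 1) * T / ((N : ℝ) - 1)))) * s
          + (β * ((N : ℝ) + 1) * Real.exp (β * ((N : ℝ) + 1) * T / ((N : ℝ) - 1))
              * (T / β + 1 / β ^ 2)
            + 2 * Real.exp (β * ((N : ℝ) + 1) * T / ((N : ℝ) - 1)) / β))
      - ((N : ℝ) - 1) / (β * (N : ℝ)) *
          (Real.exp (β * ((N : ℝ) + 1) * s / ((N : ℝ) - 1)) * Real.exp (β * s)))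

set_option maxHeartbeats 4000000 in
/-- Properties of the mean inventory process `m`: positivity of its denominator, the
boundary values `m(T) = 0` and the value of `m(0)`, and the ODE
`m'(t) = −(β/(N−1))((βy(t) − m(t)) + N(e^{−βt}x̄ + βℓ(t) − m(t)))` on `[0,T]`, where
`y(t) = ∫_t^T e^{−β(s−t)}m(s)ds` and `ℓ(t) = ∫_0^t e^{−β(t−s)}m(s)ds`. -/
theorem meanInventory_properties (N : ℕ) (hN : 2 ≤ N) (β T xbar : ℝ)
    (hβ : 0 < β) (hT : 0 < T) :
    (0 < ((β * T + 1) * (N : ℝ) + β * T + 3) * (N : ℝ)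
        * Real.exp (β * ((N : ℝ) + 1) * T / ((N : ℝ) - 1)) - (N : ℝ) + 1) ∧
    meanInventory N β T xbar T = 0 ∧
    meanInventory N β T xbar 0
      = xbar * ((N : ℝ) * ((((N : ℝ) + 1) * β * T + 2)
            * Real.exp (β * ((N : ℝ) + 1) * T / ((N : ℝ) - 1)) - 2)) /
        (((β * T + 1) * (N : ℝ) + β * T + 3) * (N : ℝ)
            * Real.exp (β * ((N : ℝ) + 1) * T / ((N : ℝ) - 1)) - (N : ℝ) + 1) ∧
    ∀ t ∈ Set.Icc (0 : ℝ) T,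
      HasDerivAt (meanInventory N β T xbar)
        (-(β / ((N : ℝ) - 1)) *
          ((β * (∫ s in t..T, Real.exp (-β * (s - t)) * meanInventory N β T xbar s)
              - meanInventory N β T xbar t)
            + (N : ℝ) * (Real.exp (-β * t) * xbar
              + β * (∫ s in (0 : ℝ)..t, Real.exp (-β * (t - s)) * meanInventory N β T xbar s)
              - meanInventory N β T xbar t))) t := by
  have hn : (2 : ℝ) ≤ (N : ℝ) := by exact_mod_cast hN
  have hn1 : (0 : ℝ) < (N : ℝ) - 1 := by linarith
  have hn0 : (0 : ℝ) < (N : ℝ) := by linarith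
  have hβ' : β ≠ 0 := ne_of_gt hβ
  have hθ : 0 ≤ β * ((N : ℝ) + 1) * T / ((N : ℝ) - 1) :=
    div_nonneg (by positivity) hn1.le
  have hE1 : (1 : ℝ) ≤ Real.exp (β * ((N : ℝ) + 1) * T / ((N : ℝ) - 1)) := by
    calc (1 : ℝ) = Real.exp 0 := Real.exp_zero.symm
    _ ≤ _ := Real.exp_le_exp.mpr hθ
  have hcn : (0 : ℝ) ≤ ((β * T + 1) * (N : ℝ) + β * T + 3) * (N : ℝ) := by positivity
  have hD : 0 < ((β * T + 1) * (N : ℝ) + β * T + 3) * (N : ℝ)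
      * Real.exp (β * ((N : ℝ) + 1) * T / ((N : ℝ) - 1)) - (N : ℝ) + 1 := by
    have hc3 : (3 : ℝ) ≤ (β * T + 1) * (N : ℝ) + β * T + 3 := by
      nlinarith [mul_pos hβ hT, mul_pos (mul_pos hβ hT) hn0]
    have h3n : 3 * (N : ℝ) ≤ ((β * T + 1) * (N : ℝ) + β * T + 3) * (N : ℝ) :=
      mul_le_mul_of_nonneg_right hc3 hn0.le
    have hE' : ((β * T + 1) * (N : ℝ) + β * T + 3) * (N : ℝ)
        ≤ ((β * T + 1) * (N : ℝ) + β * T + 3) * (N : ℝ)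
          * Real.exp (β * ((N : ℝ) + 1) * T / ((N : ℝ) - 1)) := by
      nlinarith [mul_le_mul_of_nonneg_left hE1 hcn]
    linarith
  refine ⟨hD, ?_, ?_, ?_⟩
  · simp only [meanInventory]; ring
  · simp only [meanInventory, mul_zero, zero_div, Real.exp_zero, sub_zero]; ring_nf
  · intro t ht
    have hmc : Continuous (meanInventory N β T xbar) := by
      unfold meanInventory; fun_prop
    -- derivative of the two exponentials
    have hu : ∀ s : ℝ, HasDerivAt (fun x : ℝ => Real.exp (β * ((N : ℝ) + 1) * x / ((N : ℝ) - 1)))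
        (Real.exp (β * ((N : ℝ) + 1) * s / ((N : ℝ) - 1)) * (β * ((N : ℝ) + 1) / ((N : ℝ) - 1))) s := by
      intro s
      have h1 : HasDerivAt (fun x : ℝ => β * ((N : ℝ) + 1) * x / ((N : ℝ) - 1))
          (β * ((N : ℝ) + 1) / ((N : ℝ) - 1)) s := by
        simpa using ((hasDerivAt_id s).const_mul (β * ((N : ℝ) + 1))).div_const ((N : ℝ) - 1)
      exact h1.exp
    have hvexp : ∀ (c : ℝ) (s : ℝ), HasDerivAt (fun x : ℝ => Real.exp (c * x))
        (Real.exp (c * s) * c) s := by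
      intro c s; simpa using ((hasDerivAt_id s).const_mul c).exp
    -- derivative of m itself
    have hm' : ∀ s : ℝ, HasDerivAt (meanInventory N β T xbar)
        ((xbar * ((N : ℝ) * ((-(β * ((N : ℝ) + 1))) * Real.exp (β * ((N : ℝ) + 1) * T / ((N : ℝ) - 1))
            - 2 * (Real.exp (β * ((N : ℝ) + 1) * s / ((N : ℝ) - 1)) * (β * ((N : ℝ) + 1) / ((N : ℝ) - 1)))))) /
          (((β * T + 1) * (N : ℝ) + β * T + 3) * (N : ℝ)
            * Real.exp (β * ((N : ℝ) + 1) * T / ((N : ℝ) - 1)) - (N : ℝ) + 1)) s := by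
      intro s
      have hrw : meanInventory N β T xbar = fun x =>
          xbar * ((N : ℝ) * ((β * (T - x) * ((N : ℝ) + 1) + 2)
              * Real.exp (β * ((N : ℝ) + 1) * T / ((N : ℝ) - 1))
            - 2 * Real.exp (β * ((N : ℝ) + 1) * x / ((N : ℝ) - 1)))) /
          (((β * T + 1) * (N : ℝ) + β * T + 3) * (N : ℝ)
              * Real.exp (β * ((N : ℝ) + 1) * T / ((N : ℝ) - 1)) - (N : ℝ) + 1) := rfl
      rw [hrw]
      have hsub : HasDerivAt (fun x : ℝ => T - x) (-1) s := by
        simpa using (hasDerivAt_id' s).const_sub T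
      have ha : HasDerivAt (fun x : ℝ => β * (T - x) * ((N : ℝ) + 1) + 2)
          (-(β * ((N : ℝ) + 1))) s := by
        have := ((hsub.const_mul β).mul_const ((N : ℝ) + 1)).add_const 2
        convert this using 1; rfl; rfl; ring
      exact (((ha.mul_const _).sub ((hu s).const_mul 2)).const_mul ((N : ℝ))).const_mul xbar
        |>.div_const _
    -- derivative of auxF
    have hF : ∀ s : ℝ, HasDerivAt (auxF N β T xbar)
        (Real.exp (-β * s) * meanInventory N β T xbar s) s := by
      intro s
      have hrw : auxF N β T xbar = fun x =>
          xbar * (N : ℝ) /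
            (((β * T + 1) * (N : ℝ) + β * T + 3) * (N : ℝ)
                * Real.exp (β * ((N : ℝ) + 1) * T / ((N : ℝ) - 1)) - (N : ℝ) + 1) *
            (Real.exp (-β * x) *
                ((((N : ℝ) + 1) * Real.exp (β * ((N : ℝ) + 1) * T / ((N : ℝ) - 1))) * x
                  + (β * ((N : ℝ) + 1) * Real.exp (β * ((N : ℝ) + 1) * T / ((N : ℝ) - 1))
                      * (1 / β ^ 2 - T / β)
                    - 2 * Real.exp (β * ((N : ℝ) + 1) * T / ((N : ℝ) - 1)) / β))
              - ((N : ℝ) - 1) / β *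
                  (Real.exp (β * ((N : ℝ) + 1) * x / ((N : ℝ) - 1)) * Real.exp (-β * x))) := rfl
      rw [hrw]
      have hlin : HasDerivAt (fun x : ℝ =>
          (((N : ℝ) + 1) * Real.exp (β * ((N : ℝ) + 1) * T / ((N : ℝ) - 1))) * x
            + (β * ((N : ℝ) + 1) * Real.exp (β * ((N : ℝ) + 1) * T / ((N : ℝ) - 1))
                * (1 / β ^ 2 - T / β)
              - 2 * Real.exp (β * ((N : ℝ) + 1) * T / ((N : ℝ) - 1)) / β))
          ((((N : ℝ) + 1) * Real.exp (β * ((N : ℝ) + 1) * T / ((N : ℝ) - 1)))) s := by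
        simpa using ((hasDerivAt_id s).const_mul
          ((((N : ℝ) + 1) * Real.exp (β * ((N : ℝ) + 1) * T / ((N : ℝ) - 1))))).add_const
            (β * ((N : ℝ) + 1) * Real.exp (β * ((N : ℝ) + 1) * T / ((N : ℝ) - 1))
                * (1 / β ^ 2 - T / β)
              - 2 * Real.exp (β * ((N : ℝ) + 1) * T / ((N : ℝ) - 1)) / β)
      have h1 := (hvexp (-β) s).mul hlin
      have h2 := ((hu s).mul (hvexp (-β) s)).const_mul (((N : ℝ) - 1) / β)
      have h3 := (h1.sub h2).const_mul (xbar * (N : ℝ) /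
        (((β * T + 1) * (N : ℝ) + β * T + 3) * (N : ℝ)
            * Real.exp (β * ((N : ℝ) + 1) * T / ((N : ℝ) - 1)) - (N : ℝ) + 1))
      convert h3 using 1
      show Real.exp (-β * s) * meanInventory N β T xbar s = _
      unfold meanInventory
      field_simp
      ring
      all_goals rfl
    -- derivative of auxG
    have hG : ∀ s : ℝ, HasDerivAt (auxG N β T xbar)
        (Real.exp (β * s) * meanInventory N β T xbar s) s := by
      intro s
      have hrw : auxG N β T xbar = fun x =>
          xbar * (N : ℝ) /
            (((β * T + 1) * (N : ℝ) + β * T + 3) * (N : ℝ)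
                * Real.exp (β * ((N : ℝ) + 1) * T / ((N : ℝ) - 1)) - (N : ℝ) + 1) *
            (Real.exp (β * x) *
                ((-(((N : ℝ) + 1) * Real.exp (β * ((N : ℝ) + 1) * T / ((N : ℝ) - 1)))) * x
                  + (β * ((N : ℝ) + 1) * Real.exp (β * ((N : ℝ) + 1) * T / ((N : ℝ) - 1))
                      * (T / β + 1 / β ^ 2)
                    + 2 * Real.exp (β * ((N : ℝ) + 1) * T / ((N : ℝ) - 1)) / β))
              - ((N : ℝ) - 1) / (β * (N : ℝ)) *
                  (Real.exp (β * ((N : ℝ) + 1) * x / ((N : ℝ) - 1)) * Real.exp (β * x))) := rfl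
      rw [hrw]
      have hlin : HasDerivAt (fun x : ℝ =>
          (-(((N : ℝ) + 1) * Real.exp (β * ((N : ℝ) + 1) * T / ((N : ℝ) - 1)))) * x
            + (β * ((N : ℝ) + 1) * Real.exp (β * ((N : ℝ) + 1) * T / ((N : ℝ) - 1))
                * (T / β + 1 / β ^ 2)
              + 2 * Real.exp (β * ((N : ℝ) + 1) * T / ((N : ℝ) - 1)) / β))
          ((-(((N : ℝ) + 1) * Real.exp (β * ((N : ℝ) + 1) * T / ((N : ℝ) - 1))))) s := by
        simpa using ((hasDerivAt_id s).const_mul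
          ((-(((N : ℝ) + 1) * Real.exp (β * ((N : ℝ) + 1) * T / ((N : ℝ) - 1)))))).add_const
            (β * ((N : ℝ) + 1) * Real.exp (β * ((N : ℝ) + 1) * T / ((N : ℝ) - 1))
                * (T / β + 1 / β ^ 2)
              + 2 * Real.exp (β * ((N : ℝ) + 1) * T / ((N : ℝ) - 1)) / β)
      have h1 := (hvexp β s).mul hlin
      have h2 := ((hu s).mul (hvexp β s)).const_mul (((N : ℝ) - 1) / (β * (N : ℝ)))
      have h3 := (h1.sub h2).const_mul (xbar * (N : ℝ) /
        (((β * T + 1) * (N : ℝ) + β * T + 3) * (N : ℝ)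
            * Real.exp (β * ((N : ℝ) + 1) * T / ((N : ℝ) - 1)) - (N : ℝ) + 1))
      convert h3 using 1
      show Real.exp (β * s) * meanInventory N β T xbar s = _
      unfold meanInventory
      field_simp
      ring
      all_goals rfl
    -- closed form of the two integrals
    have hy : (∫ s in t..T, Real.exp (-β * (s - t)) * meanInventory N β T xbar s)
        = Real.exp (β * t) * auxF N β T xbar T - Real.exp (β * t) * auxF N β T xbar t := by
      apply intervalIntegral.integral_eq_sub_of_hasDerivAt
        (f := fun s => Real.exp (β * t) * auxF N β T xbar s)
      · intro s _
        have h := (hF s).const_mul (Real.exp (β * t))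
        convert h using 1
        rfl
        rw [show -β * (s - t) = β * t + -β * s by ring, Real.exp_add]; ring
      · exact (Continuous.mul (by fun_prop) hmc).intervalIntegrable _ _
    have hl : (∫ s in (0 : ℝ)..t, Real.exp (-β * (t - s)) * meanInventory N β T xbar s)
        = Real.exp (-β * t) * auxG N β T xbar t - Real.exp (-β * t) * auxG N β T xbar 0 := by
      apply intervalIntegral.integral_eq_sub_of_hasDerivAt
        (f := fun s => Real.exp (-β * t) * auxG N β T xbar s)
      · intro s _
        have h := (hG s).const_mul (Real.exp (-β * t))
        convert h using 1
        rfl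
        rw [show -β * (t - s) = -β * t + β * s by ring, Real.exp_add]; ring
      · exact (Continuous.mul (by fun_prop) hmc).intervalIntegrable _ _
    -- finish
    have hd := hm' t
    convert hd using 1
    rw [hy, hl]
    have hinv : Real.exp (β * t) = (Real.exp (-β * t))⁻¹ := by
      rw [← Real.exp_neg]; congr 1; ring
    have hv : Real.exp (-β * t) ≠ 0 := Real.exp_ne_zero _
    have hD' : ((β * T + 1) * (N : ℝ) + β * T + 3) * (N : ℝ)
        * Real.exp (β * ((N : ℝ) + 1) * T / ((N : ℝ) - 1)) - (N : ℝ) + 1 ≠ 0 := hD.ne'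
    simp only [meanInventory, auxF, auxG]
    rw [hinv]
    rw [show β * ((N : ℝ) + 1) * (0 : ℝ) / ((N : ℝ) - 1) = 0 by ring,
      show β * (0 : ℝ) = 0 by ring, Real.exp_zero]
    set E := Real.exp (β * ((N : ℝ) + 1) * T / ((N : ℝ) - 1)) with hE
    set u := Real.exp (β * ((N : ℝ) + 1) * t / ((N : ℝ) - 1)) with huu
    set v := Real.exp (-β * t) with hvv
    set w := Real.exp (-β * T) with hw
    have hD'' : (N : ℝ) * (((N : ℝ) * (β * T + 1) + β * T + 3) * E - 1) + 1 ≠ 0 := by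
      intro h; apply hD'; linear_combination h
    field_simp
    ring
end

section
/- Fix reals λ > 0, β > 0, T > 0, ε > 0 and an integer N ≥ 2. Define D = √((N−1)²λ² + 4βε(N+1)λ + 4β²ε²), z_1 = (−λ(N−1) + D)/(2ε), z_2 = (−λ(N−1) − D)/(2ε), γ_1 = 1/(z_1+β) + e^{z_1 T}/(z_1−β), γ_2 = 1/(z_2+β) + e^{z_2 T}/(z_2−β), and ρ_− = e^{z_1 T}/(z_1−β) − (γ_1/γ_2)·e^{z_2 T}/(z_2−β). Then z_1 > β, z_2 < −β, γ_1 ≥ 0, γ_2 ≤ 0, and ρ_− ≥ 0. -/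
set_option maxHeartbeats 800000 in
private lemma rho_identity (E1 E2 a b c d g : ℝ) (ha : a ≠ 0) (hb : b ≠ 0)
    (hc : c ≠ 0) (hd : d ≠ 0) (hg : g ≠ 0) (hgdef : g = 1 / c + E2 / d) :
    E1 / b - (1 / a + E1 / b) / g * (E2 / d)
      = (E1 / (b * c) - E2 / (a * d)) / g := by
  rw [eq_div_iff hg, sub_mul]
  have h2 : (1 / a + E1 / b) / g * (E2 / d) * g = (1 / a + E1 / b) * (E2 / d) := by
    field_simp
  rw [h2, hgdef]
  field_simp
  ring

/-- Sign properties of the constants `z_1, z_2, γ_1, γ_2, ρ_−` from the table of constants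
of the `N`-player execution game with instantaneous cost `ε`:
`z_1 > β`, `z_2 < −β`, `γ_1 ≥ 0`, `γ_2 ≤ 0`, `ρ_− ≥ 0`. -/
theorem constants_sign_properties (N : ℕ) (hN : 2 ≤ N) (lam β T ε : ℝ)
    (hlam : 0 < lam) (hβ : 0 < β) (hT : 0 < T) (hε : 0 < ε)
    (D z1 z2 γ1 γ2 ρm : ℝ)
    (hD : D = Real.sqrt (((N : ℝ) - 1) ^ 2 * lam ^ 2
      + 4 * β * ε * ((N : ℝ) + 1) * lam + 4 * β ^ 2 * ε ^ 2))
    (hz1 : z1 = (-(lam * ((N : ℝ) - 1)) + D) / (2 * ε))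
    (hz2 : z2 = (-(lam * ((N : ℝ) - 1)) - D) / (2 * ε))
    (hγ1 : γ1 = 1 / (z1 + β) + Real.exp (z1 * T) / (z1 - β))
    (hγ2 : γ2 = 1 / (z2 + β) + Real.exp (z2 * T) / (z2 - β))
    (hρm : ρm = Real.exp (z1 * T) / (z1 - β) - γ1 / γ2 * (Real.exp (z2 * T) / (z2 - β))) :
    β < z1 ∧ z2 < -β ∧ 0 ≤ γ1 ∧ γ2 ≤ 0 ∧ 0 ≤ ρm := by
  have hNR : (1 : ℝ) ≤ (N : ℝ) - 1 := by
    have : (2 : ℝ) ≤ (N : ℝ) := by exact_mod_cast hN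
    linarith
  set c : ℝ := lam * ((N : ℝ) - 1) with hc
  have hcpos : 0 < c := by positivity
  -- D > 2εβ + c
  have hDgt : 2 * ε * β + c < D := by
    have hsq : (2 * ε * β + c) ^ 2
        < ((N : ℝ) - 1) ^ 2 * lam ^ 2 + 4 * β * ε * ((N : ℝ) + 1) * lam + 4 * β ^ 2 * ε ^ 2 := by
      have h8 : 0 < 8 * β * ε * lam := by positivity
      have hexp : ((N : ℝ) - 1) ^ 2 * lam ^ 2 + 4 * β * ε * ((N : ℝ) + 1) * lam + 4 * β ^ 2 * ε ^ 2
          = (2 * ε * β + c) ^ 2 + 8 * β * ε * lam := by rw [hc]; ring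
      linarith
    have h0 : 0 ≤ 2 * ε * β + c := by positivity
    calc 2 * ε * β + c = Real.sqrt ((2 * ε * β + c) ^ 2) := by
          rw [Real.sqrt_sq h0]
      _ < D := by
          rw [hD]
          exact Real.sqrt_lt_sqrt (by positivity) hsq
  have hβz1 : β < z1 := by
    rw [hz1]
    rw [lt_div_iff₀ (by positivity)]
    linarith
  have hz2β : z2 < -β := by
    rw [hz2]
    rw [div_lt_iff₀ (by positivity)]
    linarith
  have hp1 : 0 < z1 + β := by linarith
  have hm1 : 0 < z1 - β := by linarith
  have hp2 : z2 + β < 0 := by linarith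
  have hm2 : z2 - β < 0 := by linarith
  have hE1 : 0 < Real.exp (z1 * T) := Real.exp_pos _
  have hE2 : 0 < Real.exp (z2 * T) := Real.exp_pos _
  have hγ1pos : 0 < γ1 := by
    rw [hγ1]
    positivity
  have hγ2neg : γ2 < 0 := by
    rw [hγ2]
    have h1 : 1 / (z2 + β) < 0 := div_neg_of_pos_of_neg one_pos hp2
    have h2 : Real.exp (z2 * T) / (z2 - β) < 0 := div_neg_of_pos_of_neg hE2 hm2
    linarith
  have hγ2ne : γ2 ≠ 0 := ne_of_lt hγ2neg
  -- key inequality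
  have hE12 : Real.exp (z2 * T) ≤ Real.exp (z1 * T) := by
    apply Real.exp_le_exp.mpr
    nlinarith
  have hkey : Real.exp (z1 * T) / ((z1 - β) * (z2 + β))
      ≤ Real.exp (z2 * T) / ((z1 + β) * (z2 - β)) := by
    have h1 : Real.exp (z1 * T) / ((z1 - β) * (z2 + β))
        = -(Real.exp (z1 * T) / ((z1 - β) * (-(z2 + β)))) := by
      rw [mul_neg, div_neg, neg_neg]
    have h2 : Real.exp (z2 * T) / ((z1 + β) * (z2 - β))
        = -(Real.exp (z2 * T) / ((z1 + β) * (-(z2 - β)))) := by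
      rw [mul_neg, div_neg, neg_neg]
    rw [h1, h2, neg_le_neg_iff]
    have hd1 : 0 < (z1 - β) * (-(z2 + β)) := mul_pos hm1 (by linarith)
    have hd2 : 0 < (z1 + β) * (-(z2 - β)) := mul_pos hp1 (by linarith)
    rw [div_le_div_iff₀ hd2 hd1]
    have hmul : (z1 - β) * (-(z2 + β)) ≤ (z1 + β) * (-(z2 - β)) := by nlinarith
    exact mul_le_mul hE12 hmul (le_of_lt hd1) (le_of_lt hE1)
  have hid : ρm = (Real.exp (z1 * T) / ((z1 - β) * (z2 + β))
      - Real.exp (z2 * T) / ((z1 + β) * (z2 - β))) / γ2 := by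
    rw [hρm, hγ1]
    exact rho_identity _ _ _ _ _ _ _ (ne_of_gt hp1) (ne_of_gt hm1)
      (ne_of_lt hp2) (ne_of_lt hm2) hγ2ne hγ2
  have hρ : 0 ≤ ρm := by
    rw [hid]
    rw [div_nonneg_iff]
    right
    exact ⟨by linarith, le_of_lt hγ2neg⟩
  exact ⟨hβz1, hz2β, le_of_lt hγ1pos, le_of_lt hγ2neg, hρ⟩
end

section
/- Fix reals λ > 0, β > 0, T > 0, ε > 0 and an integer N ≥ 2. Define D = √((N−1)²λ² + 4βε(N+1)λ + 4β²ε²), z_1 = (−λ(N−1) + D)/(2ε), z_2 = (−λ(N−1) − D)/(2ε), γ_1 = 1/(z_1+β) + e^{z_1 T}/(z_1−β), γ_2 = 1/(z_2+β) + e^{z_2 T}/(z_2−β), and ρ_− = e^{z_1 T}/(z_1−β) − (γ_1/γ_2)·e^{z_2 T}/(z_2−β). Set Ψ = βρ_−T + (e^{z_1 T} − 1)/z_1 − (γ_1/γ_2)(e^{z_2 T} − 1)/z_2 and define 𝔤 : [0,T] → ℝ by 𝔤(t) = 1 − (βρ_− t + (e^{z_1 t} − 1)/z_1 − (γ_1/γ_2)(e^{z_2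 t} − 1)/z_2)/Ψ. Then Ψ > 0, 𝔤(0) = 1, and 𝔤 is monotone nonincreasing on [0,T]; in fact 𝔤 is differentiable with 𝔤'(t) = −(βρ_− + e^{z_1 t} − (γ_1/γ_2)e^{z_2 t})/Ψ ≤ 0 for all t ∈ [0,T]. -/
set_option maxHeartbeats 1000000


/-- Properties of the mean-inventory component `𝔤` of the equilibrium of the `N`-player
execution game with instantaneous cost `ε` and liquidation constraint: `Ψ > 0`,
`𝔤(0) = 1`, `𝔤` is monotone nonincreasing on `[0,T]`, and `𝔤` has the explicit
nonpositive derivative `−(βρ_− + e^{z_1 t} − (γ_1/γ_2)e^{z_2 t})/Ψ`. -/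
theorem liq_constr_g_properties (N : ℕ) (hN : 2 ≤ N) (lam β T ε : ℝ)
    (hlam : 0 < lam) (hβ : 0 < β) (hT : 0 < T) (hε : 0 < ε)
    (D z1 z2 γ1 γ2 ρm Ψ : ℝ)
    (hD : D = Real.sqrt (((N : ℝ) - 1) ^ 2 * lam ^ 2
      + 4 * β * ε * ((N : ℝ) + 1) * lam + 4 * β ^ 2 * ε ^ 2))
    (hz1 : z1 = (-(lam * ((N : ℝ) - 1)) + D) / (2 * ε))
    (hz2 : z2 = (-(lam * ((N : ℝ) - 1)) - D) / (2 * ε))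
    (hγ1 : γ1 = 1 / (z1 + β) + Real.exp (z1 * T) / (z1 - β))
    (hγ2 : γ2 = 1 / (z2 + β) + Real.exp (z2 * T) / (z2 - β))
    (hρm : ρm = Real.exp (z1 * T) / (z1 - β) - γ1 / γ2 * (Real.exp (z2 * T) / (z2 - β)))
    (hΨ : Ψ = β * ρm * T + (Real.exp (z1 * T) - 1) / z1
      - γ1 / γ2 * ((Real.exp (z2 * T) - 1) / z2))
    (g : ℝ → ℝ)
    (hg : ∀ t, g t = 1 -
      (β * ρm * t + (Real.exp (z1 * t) - 1) / z1
        - γ1 / γ2 * ((Real.exp (z2 * t) - 1) / z2)) / Ψ) :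
    0 < Ψ ∧ g 0 = 1 ∧
    AntitoneOn g (Set.Icc 0 T) ∧
    (∀ t ∈ Set.Icc (0 : ℝ) T,
      HasDerivAt g (-(β * ρm + Real.exp (z1 * t) - γ1 / γ2 * Real.exp (z2 * t)) / Ψ) t ∧
      -(β * ρm + Real.exp (z1 * t) - γ1 / γ2 * Real.exp (z2 * t)) / Ψ ≤ 0) := by
  have hN1 : (1 : ℝ) ≤ (N : ℝ) - 1 := by
    have : (2 : ℝ) ≤ (N : ℝ) := by exact_mod_cast hN
    linarith
  have hL : 0 < lam * ((N : ℝ) - 1) := by nlinarith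
  -- D > lam (N-1) + 2 ε β
  have hDgt : lam * ((N : ℝ) - 1) + 2 * ε * β < D := by
    rw [hD]
    rw [show ((N : ℝ) - 1) ^ 2 * lam ^ 2 + 4 * β * ε * ((N : ℝ) + 1) * lam + 4 * β ^ 2 * ε ^ 2
      = (lam * ((N : ℝ) - 1) + 2 * ε * β) ^ 2 + 8 * β * ε * lam by ring]
    have hx : 0 ≤ lam * ((N : ℝ) - 1) + 2 * ε * β := by nlinarith
    rw [Real.lt_sqrt hx]
    nlinarith [mul_pos (mul_pos hβ hε) hlam]
  have hz1β : β < z1 := by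
    rw [hz1, lt_div_iff₀ (by positivity : (0:ℝ) < 2 * ε)]
    nlinarith
  have hz2β : z2 < -β := by
    rw [hz2, div_lt_iff₀ (by positivity : (0:ℝ) < 2 * ε)]
    nlinarith
  have hz1pos : 0 < z1 := lt_trans hβ hz1β
  have hz2neg : z2 < 0 := by linarith
  have hz1mβ : 0 < z1 - β := by linarith
  have hz1pβ : 0 < z1 + β := by linarith
  have hz2pβ : z2 + β < 0 := by linarith
  have hz2mβ : z2 - β < 0 := by linarith
  have hE1pos := Real.exp_pos (z1 * T)
  have hE2pos := Real.exp_pos (z2 * T)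
  have hE1gt1 : 1 < Real.exp (z1 * T) := by
    rw [show (1:ℝ) = Real.exp 0 by simp]
    exact Real.exp_lt_exp.mpr (by positivity)
  have hE2lt1 : Real.exp (z2 * T) < 1 := by
    rw [show (1:ℝ) = Real.exp 0 by simp]
    exact Real.exp_lt_exp.mpr (by nlinarith)
  have hγ1pos : 0 < γ1 := by
    rw [hγ1]
    exact add_pos (div_pos one_pos hz1pβ) (div_pos hE1pos hz1mβ)
  have hγ2neg : γ2 < 0 := by
    rw [hγ2]
    have h1 : 1 / (z2 + β) < 0 := div_neg_of_pos_of_neg one_pos hz2pβ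
    have h2 : Real.exp (z2 * T) / (z2 - β) < 0 := div_neg_of_pos_of_neg hE2pos hz2mβ
    linarith
  have hγ2ne : γ2 ≠ 0 := ne_of_lt hγ2neg
  have hcneg : γ1 / γ2 < 0 := div_neg_of_pos_of_neg hγ1pos hγ2neg
  -- key identity and sign of ρm
  have hγ2ne' : 1 / (z2 + β) + Real.exp (z2 * T) / (z2 - β) ≠ 0 := by
    rw [← hγ2]; exact hγ2ne
  have key : ρm * γ2 = Real.exp (z1 * T) / ((z1 - β) * (z2 + β))
      - Real.exp (z2 * T) / ((z1 + β) * (z2 - β)) := by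
    have step1 : ρm * γ2 = Real.exp (z1 * T) / (z1 - β) * γ2
        - γ1 * (Real.exp (z2 * T) / (z2 - β)) := by
      rw [hρm, sub_mul, mul_right_comm, div_mul_cancel₀ _ hγ2ne]
    rw [step1, hγ1, hγ2]
    field_simp [hz1mβ.ne', hz1pβ.ne', hz2pβ.ne, hz2mβ.ne]
    ring
  have hρpos : 0 < ρm := by
    have hA : (z1 - β) * (z2 + β) < 0 := mul_neg_of_pos_of_neg hz1mβ hz2pβ
    have hB : (z1 + β) * (z2 - β) < 0 := mul_neg_of_pos_of_neg hz1pβ hz2mβ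
    have hE12 : Real.exp (z2 * T) < Real.exp (z1 * T) := lt_trans hE2lt1 hE1gt1
    have hrhs : Real.exp (z1 * T) / ((z1 - β) * (z2 + β))
        - Real.exp (z2 * T) / ((z1 + β) * (z2 - β)) < 0 := by
      rw [show Real.exp (z1 * T) / ((z1 - β) * (z2 + β))
          = -(Real.exp (z1 * T) / (-((z1 - β) * (z2 + β)))) by rw [div_neg]; ring,
        show Real.exp (z2 * T) / ((z1 + β) * (z2 - β))
          = -(Real.exp (z2 * T) / (-((z1 + β) * (z2 - β)))) by rw [div_neg]; ring]
      have hApos : 0 < -((z1 - β) * (z2 + β)) := by linarith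
      have hBpos : 0 < -((z1 + β) * (z2 - β)) := by linarith
      have hlt : Real.exp (z2 * T) / (-((z1 + β) * (z2 - β)))
          < Real.exp (z1 * T) / (-((z1 - β) * (z2 + β))) := by
        rw [div_lt_div_iff₀ hBpos hApos]
        nlinarith
      linarith
    nlinarith [key]
  -- Ψ > 0
  have ht2 : 0 < (Real.exp (z1 * T) - 1) / z1 := div_pos (by linarith) hz1pos
  have ht3 : 0 < (Real.exp (z2 * T) - 1) / z2 := div_pos_of_neg_of_neg (by linarith) hz2neg
  have hΨpos : 0 < Ψ := by
    rw [hΨ]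
    have : γ1 / γ2 * ((Real.exp (z2 * T) - 1) / z2) < 0 := mul_neg_of_neg_of_pos hcneg ht3
    nlinarith [mul_pos (mul_pos hβ hρpos) hT]
  -- derivative at every point
  have hderiv : ∀ t : ℝ, HasDerivAt g
      (-(β * ρm + Real.exp (z1 * t) - γ1 / γ2 * Real.exp (z2 * t)) / Ψ) t := by
    intro t
    have hgf : g = fun s => 1 - (β * ρm * s + (Real.exp (z1 * s) - 1) / z1
        - γ1 / γ2 * ((Real.exp (z2 * s) - 1) / z2)) / Ψ := funext hg
    rw [hgf]
    have e1 : HasDerivAt (fun s : ℝ => (Real.exp (z1 * s) - 1) / z1) (Real.exp (z1 * t)) t := by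
      have h := ((((hasDerivAt_id t).const_mul z1).exp).sub_const 1).div_const z1
      refine h.congr_deriv ?_
      field_simp
      rfl
    have e2 : HasDerivAt (fun s : ℝ => γ1 / γ2 * ((Real.exp (z2 * s) - 1) / z2))
        (γ1 / γ2 * Real.exp (z2 * t)) t := by
      have h := (((((hasDerivAt_id t).const_mul z2).exp).sub_const 1).div_const z2).const_mul
        (γ1 / γ2)
      refine h.congr_deriv ?_
      rw [id_eq, mul_one]
      congr 1
      field_simp [ne_of_lt hz2neg]
    have hlin : HasDerivAt (fun s : ℝ => β * ρm * s) (β * ρm) t := by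
      simpa using (hasDerivAt_id t).const_mul (β * ρm)
    have h := (hasDerivAt_const t (1:ℝ)).sub (((hlin.add e1).sub e2).div_const Ψ)
    refine h.congr_deriv ?_
    ring
  have hnum : ∀ t : ℝ, 0 < β * ρm + Real.exp (z1 * t) - γ1 / γ2 * Real.exp (z2 * t) := by
    intro t
    have h1 : γ1 / γ2 * Real.exp (z2 * t) < 0 := mul_neg_of_neg_of_pos hcneg (Real.exp_pos _)
    nlinarith [Real.exp_pos (z1 * t)]
  have hsign : ∀ t : ℝ,
      -(β * ρm + Real.exp (z1 * t) - γ1 / γ2 * Real.exp (z2 * t)) / Ψ ≤ 0 := by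
    intro t
    have h := div_nonneg (le_of_lt (hnum t)) (le_of_lt hΨpos)
    rw [neg_div]
    linarith
  refine ⟨hΨpos, ?_, ?_, fun t _ => ⟨hderiv t, hsign t⟩⟩
  · rw [hg 0]
    norm_num
  · apply antitoneOn_of_deriv_nonpos (convex_Icc 0 T)
    · exact fun x _ => (hderiv x).differentiableAt.continuousAt.continuousWithinAt
    · exact fun x _ => (hderiv x).differentiableAt.differentiableWithinAt
    · intro x _
      rw [(hderiv x).deriv]
      exact hsign x
end

section
/- Fix reals λ > 0, β > 0, T > 0 and for each ε > 0 set z_3(ε) = β + λ/ε and define 𝔣^ε : [0,T] → ℝ by 𝔣^ε(t) = 1 − (βt + λ(e^{z_3(ε)t} − 1)/(ε z_3(ε) e^{z_3(ε)T})) / (βT + λ(e^{z_3(ε)T} − 1)/(ε z_3(ε) e^{z_3(ε)T})). Then for every t ∈ [0,T), 𝔣^ε(t) → 1 − βt/(1 + βT) as ε → 0⁺; 𝔣^ε(T) = 0 for every ε > 0; and the convergence is uniform on compact subsets of (0,T). -/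
open Filter Topology

/-- The deviation-from-the-mean component `𝔣^ε` of the equilibrium with instantaneous
cost parameter `ε` and liquidation constraint. -/
noncomputable def fDev (lam β T : ℝ) (ε t : ℝ) : ℝ :=
  1 - (β * t + lam * (Real.exp ((β + lam / ε) * t) - 1) /
        (ε * (β + lam / ε) * Real.exp ((β + lam / ε) * T))) /
      (β * T + lam * (Real.exp ((β + lam / ε) * T) - 1) /
        (ε * (β + lam / ε) * Real.exp ((β + lam / ε) * T)))

noncomputable def cA (lam β T ε t : ℝ) : ℝ :=
  lam / (ε * (β + lam / ε)) *
    (Real.exp ((β + lam / ε) * (t - T)) - Real.exp (-((β + lam / ε) * T)))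

lemma frac_eq (lam β T : ℝ) (hlam : 0 < lam) (hβ : 0 < β) {ε : ℝ} (hε : 0 < ε) (t : ℝ) :
    lam * (Real.exp ((β + lam / ε) * t) - 1) /
        (ε * (β + lam / ε) * Real.exp ((β + lam / ε) * T)) = cA lam β T ε t := by
  have hz : 0 < β + lam / ε := by positivity
  unfold cA
  rw [show (β + lam / ε) * (t - T) = (β + lam / ε) * t - (β + lam / ε) * T by ring,
    Real.exp_sub, Real.exp_neg]
  have hE := Real.exp_ne_zero ((β + lam / ε) * T)
  field_simp

lemma tendsto_z (lam β : ℝ) (hlam : 0 < lam) :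
    Tendsto (fun ε : ℝ => β + lam / ε) (𝓝[>] 0) atTop := by
  have h : Tendsto (fun ε : ℝ => lam / ε) (𝓝[>] 0) atTop := by
    simp only [div_eq_mul_inv]
    exact tendsto_inv_nhdsGT_zero.const_mul_atTop hlam
  exact tendsto_atTop_add_const_left _ β h

lemma tendsto_c (lam β : ℝ) (hlam : 0 < lam) (hβ : 0 < β) :
    Tendsto (fun ε : ℝ => lam / (ε * (β + lam / ε))) (𝓝[>] 0) (𝓝 1) := by
  have h1 : Tendsto (fun ε : ℝ => lam / (ε * β + lam)) (𝓝[>] 0) (𝓝 1) := by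
    have h2 : Tendsto (fun ε : ℝ => ε * β + lam) (𝓝 0) (𝓝 (0 * β + lam)) :=
      (tendsto_id.mul_const β).add_const lam
    have h3 : Tendsto (fun ε : ℝ => lam / (ε * β + lam)) (𝓝 0) (𝓝 (lam / (0 * β + lam))) :=
      tendsto_const_nhds.div h2 (by simpa using hlam.ne')
    simp only [zero_mul, zero_add, div_self hlam.ne'] at h3
    exact h3.mono_left nhdsWithin_le_nhds
  refine h1.congr' ?_
  filter_upwards [self_mem_nhdsWithin] with ε (hε : 0 < ε)
  have h4 : ε * (β + lam / ε) = ε * β + lam := by field_simp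
  rw [h4]

lemma tendsto_exp0 (lam β : ℝ) (hlam : 0 < lam) {s : ℝ} (hs : s < 0) :
    Tendsto (fun ε : ℝ => Real.exp ((β + lam / ε) * s)) (𝓝[>] 0) (𝓝 0) := by
  have h := (tendsto_z lam β hlam).atTop_mul_const_of_neg hs
  exact Real.tendsto_exp_atBot.comp h

lemma tendsto_cA_T (lam β T : ℝ) (hlam : 0 < lam) (hβ : 0 < β) (hT : 0 < T) :
    Tendsto (fun ε : ℝ => cA lam β T ε T) (𝓝[>] 0) (𝓝 1) := by
  unfold cA
  have h1 : Tendsto (fun ε : ℝ => Real.exp (-((β + lam / ε) * T))) (𝓝[>] 0) (𝓝 0) := by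
    have := tendsto_exp0 lam β hlam (s := -T) (by linarith)
    simpa [mul_neg] using this
  have := (tendsto_c lam β hlam hβ).mul (tendsto_const_nhds (x := (1:ℝ)).sub h1)
  simpa [sub_self] using this

lemma tendsto_cA (lam β T : ℝ) (hlam : 0 < lam) (hβ : 0 < β) (hT : 0 < T) {t : ℝ} (ht : t < T) :
    Tendsto (fun ε : ℝ => cA lam β T ε t) (𝓝[>] 0) (𝓝 0) := by
  unfold cA
  have h1 := tendsto_exp0 lam β hlam (s := t - T) (by linarith)
  have h2 : Tendsto (fun ε : ℝ => Real.exp (-((β + lam / ε) * T))) (𝓝[>] 0) (𝓝 0) := by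
    have := tendsto_exp0 lam β hlam (s := -T) (by linarith)
    simpa [mul_neg] using this
  have := (tendsto_c lam β hlam hβ).mul (h1.sub h2)
  simpa using this

lemma cA_nonneg (lam β T : ℝ) (hlam : 0 < lam) (hβ : 0 < β) {ε t : ℝ} (hε : 0 < ε)
    (ht : 0 ≤ t) : 0 ≤ cA lam β T ε t := by
  have hz : 0 < β + lam / ε := by positivity
  have hc : 0 < lam / (ε * (β + lam / ε)) := by positivity
  have he : Real.exp (-((β + lam / ε) * T)) ≤ Real.exp ((β + lam / ε) * t - (β + lam / ε) * T) :=
    Real.exp_le_exp.mpr (by nlinarith)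
  rw [show (β + lam / ε) * t - (β + lam / ε) * T = (β + lam / ε) * (t - T) by ring] at he
  unfold cA
  nlinarith

lemma cA_le (lam β T : ℝ) (hlam : 0 < lam) (hβ : 0 < β) {ε t b : ℝ} (hε : 0 < ε)
    (htb : t ≤ b) :
    cA lam β T ε t ≤ lam / (ε * (β + lam / ε)) * Real.exp ((β + lam / ε) * (b - T)) := by
  have hz : 0 < β + lam / ε := by positivity
  have hc : 0 < lam / (ε * (β + lam / ε)) := by positivity
  have h1 : Real.exp ((β + lam / ε) * (t - T)) ≤ Real.exp ((β + lam / ε) * (b - T)) :=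
    Real.exp_le_exp.mpr (by nlinarith)
  have h2 : 0 < Real.exp (-((β + lam / ε) * T)) := Real.exp_pos _
  unfold cA
  nlinarith

lemma fDev_eq (lam β T : ℝ) (hlam : 0 < lam) (hβ : 0 < β) {ε : ℝ} (hε : 0 < ε) (t : ℝ) :
    fDev lam β T ε t = 1 - (β * t + cA lam β T ε t) / (β * T + cA lam β T ε T) := by
  rw [fDev, frac_eq lam β T hlam hβ hε t, frac_eq lam β T hlam hβ hε T]


/-- As `ε → 0⁺`, `𝔣^ε(t) → 1 − βt/(1 + βT)` pointwise on `[0,T)`, `𝔣^ε(T) = 0` for every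
`ε > 0`, and the convergence is uniform on compact subsets of `(0,T)`. -/
theorem fDev_small_eps_limit (lam β T : ℝ) (hlam : 0 < lam) (hβ : 0 < β) (hT : 0 < T) :
    (∀ t ∈ Set.Ico (0 : ℝ) T,
      Tendsto (fun ε : ℝ => fDev lam β T ε t) (𝓝[>] 0) (𝓝 (1 - β * t / (1 + β * T)))) ∧
    (∀ ε : ℝ, 0 < ε → fDev lam β T ε T = 0) ∧
    (∀ K : Set ℝ, K ⊆ Set.Ioo 0 T → IsCompact K →
      TendstoUniformlyOn (fun ε t => fDev lam β T ε t)
        (fun t => 1 - β * t / (1 + β * T)) (𝓝[>] 0) K) := by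
  have h1T : (0:ℝ) < 1 + β * T := by positivity
  refine ⟨?_, ?_, ?_⟩
  · intro t ht
    obtain ⟨ht0, htT⟩ := ht
    have h0 : Tendsto (fun ε : ℝ => 1 - (β * t + cA lam β T ε t) / (β * T + cA lam β T ε T))
        (𝓝[>] 0) (𝓝 (1 - (β * t + 0) / (β * T + 1))) :=
      tendsto_const_nhds.sub ((tendsto_const_nhds.add (tendsto_cA lam β T hlam hβ hT htT)).div
        (tendsto_const_nhds.add (tendsto_cA_T lam β T hlam hβ hT)) (by positivity))
    have heq : (fun ε : ℝ => 1 - (β * t + cA lam β T ε t) / (β * T + cA lam β T ε T))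
        =ᶠ[𝓝[>] (0:ℝ)] fun ε => fDev lam β T ε t := by
      filter_upwards [self_mem_nhdsWithin] with ε (hε : 0 < ε)
      exact (fDev_eq lam β T hlam hβ hε t).symm
    have h2 := h0.congr' heq
    rw [show 1 - (β * t + 0) / (β * T + 1) = 1 - β * t / (1 + β * T) by ring_nf] at h2
    exact h2
  · intro ε hε
    have hA : 0 ≤ cA lam β T ε T := cA_nonneg lam β T hlam hβ hε hT.le
    have hD : 0 < β * T + cA lam β T ε T := by nlinarith
    rw [fDev_eq lam β T hlam hβ hε T, div_self hD.ne', sub_self]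
  · intro K hK hKc
    rcases K.eq_empty_or_nonempty with rfl | hKne
    · exact tendstoUniformlyOn_empty
    have hbdd : BddAbove K := hKc.bddAbove
    set b := sSup K with hb
    have hbK : b ∈ K := hKc.sSup_mem hKne
    obtain ⟨hb0, hbT⟩ := hK hbK
    rw [Metric.tendstoUniformlyOn_iff]
    intro δ hδ
    set η : ℝ := δ * (β * T + 1/2) / 2 with hη
    have hη0 : 0 < η := by positivity
    have hB1 : ∀ᶠ ε in 𝓝[>] (0:ℝ), |cA lam β T ε T - 1| < η := by
      have := (tendsto_cA_T lam β T hlam hβ hT).eventually (Metric.ball_mem_nhds (1:ℝ) hη0)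
      filter_upwards [this] with ε hε
      simpa [Metric.mem_ball, Real.dist_eq] using hε
    have hBh : ∀ᶠ ε in 𝓝[>] (0:ℝ), (1:ℝ)/2 < cA lam β T ε T :=
      (tendsto_cA_T lam β T hlam hβ hT).eventually (lt_mem_nhds (by norm_num))
    have haη : ∀ᶠ ε in 𝓝[>] (0:ℝ),
        lam / (ε * (β + lam / ε)) * Real.exp ((β + lam / ε) * (b - T)) < η := by
      have h0 : Tendsto (fun ε : ℝ =>
          lam / (ε * (β + lam / ε)) * Real.exp ((β + lam / ε) * (b - T))) (𝓝[>] 0) (𝓝 0) := by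
        have := (tendsto_c lam β hlam hβ).mul (tendsto_exp0 lam β hlam (s := b - T) (by linarith))
        simpa using this
      exact h0.eventually (gt_mem_nhds hη0)
    filter_upwards [self_mem_nhdsWithin, hB1, hBh, haη] with ε (hε : 0 < ε) hB1ε hBhε haε
    intro t htK
    obtain ⟨ht0, htT⟩ := hK htK
    have htb : t ≤ b := le_csSup hbdd htK
    set B := cA lam β T ε T with hBdef
    set a := cA lam β T ε t with hadef
    have ha0 : 0 ≤ a := cA_nonneg lam β T hlam hβ hε ht0.le
    have haup : a < η := lt_of_le_of_lt (cA_le lam β T hlam hβ hε htb) haε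
    have hD : 0 < β * T + B := by nlinarith
    have key : (fun t => 1 - β * t / (1 + β * T)) t - fDev lam β T ε t =
        (a * (1 + β * T) - β * t * (B - 1)) / ((β * T + B) * (1 + β * T)) := by
      rw [fDev_eq lam β T hlam hβ hε t, ← hBdef, ← hadef]
      field_simp
      ring
    rw [Real.dist_eq, key, abs_div, abs_of_pos (mul_pos hD h1T)]
    have hnum : |a * (1 + β * T) - β * t * (B - 1)| ≤ a * (1 + β * T) + β * T * η := by
      have h1 : |a * (1 + β * T)| = a * (1 + β * T) := abs_of_nonneg (by positivity)
      have h2 : |β * t * (B - 1)| ≤ β * T * η := by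
        rw [abs_mul]
        have : |β * t| ≤ β * T := by
          rw [abs_of_nonneg (by positivity)]; nlinarith
        nlinarith [abs_nonneg (B - 1), abs_nonneg (β * t)]
      calc |a * (1 + β * T) - β * t * (B - 1)| ≤ |a * (1 + β * T)| + |β * t * (B - 1)| :=
            abs_sub _ _
        _ ≤ a * (1 + β * T) + β * T * η := by rw [h1]; linarith
    rw [div_lt_iff₀ (mul_pos hD h1T)]
    have hden : (β * T + 1/2) * (1 + β * T) ≤ (β * T + B) * (1 + β * T) := by nlinarith
    nlinarith [mul_lt_mul_of_pos_right haup h1T, mul_le_mul_of_nonneg_left hden hδ.le,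
      mul_pos hδ (by positivity : (0:ℝ) < β * T + 1/2), mul_pos hβ hT,
      mul_pos (mul_pos hδ (by positivity : (0:ℝ) < β * T + 1/2)) (mul_pos hβ hT)]
end
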